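/- Let S ∈ ℝ^{K×K} be irreducible with nonnegative entries and have support, with normal form and edge sets ℰ^⊲, ℰ^≺ on {1,…,L} as in the context. Then the directed graph ({1,…,L}, ℰ^⊲ ∪ ℰ^≺) contains at least one cycle, every cycle contains at least one edge of ℰ^≺ ∖ ℰ^⊲, and consequently κ := min over all cycles γ of ⟨γ⟩/|γ| is well defined and satisfies 0 < κ ≤ 1, where |γ| is the number of edges of γ and ⟨γ⟩ is the number of edges of γ lying in ℰ^≺ ∖ ℰ^⊲. -/

import Mathlib

open Matrix Filter Topology

/-- The normalized average `⟨x⟩ = (1/d) ∑ i, x i` of a vector. -/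
noncomputable def avg {d : ℕ} (x : Fin d → ℝ) : ℝ := (∑ i, x i) / d

/-- The Dyson equation (at `η = 0`) with parameter `τ > 0` for an entrywise positive pair
`(v, w)` with `Sw`, `Sᵗv` entrywise positive: `1/v = Sw + τ/(Sᵗv)`, `1/w = Sᵗv + τ/(Sw)`. -/
def DysonSol {K : ℕ} (S : Matrix (Fin K) (Fin K) ℝ) (τ : ℝ) (v w : Fin K → ℝ) : Prop :=
  (∀ i, 0 < v i) ∧ (∀ i, 0 < w i) ∧
  (∀ i, 0 < S.mulVec w i) ∧ (∀ i, 0 < Sᵀ.mulVec v i) ∧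
  (∀ i, 1 / v i = S.mulVec w i + τ / Sᵀ.mulVec v i) ∧
  (∀ i, 1 / w i = Sᵀ.mulVec v i + τ / S.mulVec w i)

/-- The permuted matrix `S̃ = Q₁ S Q₂ᵗ`, where `Q₁, Q₂` are the permutation matrices of
`σ₁, σ₂`; entrywise `S̃ i j = S (σ₁ i) (σ₂ j)`. -/
def tildeS {K : ℕ} (S : Matrix (Fin K) (Fin K) ℝ) (σ₁ σ₂ : Equiv.Perm (Fin K)) :
    Matrix (Fin K) (Fin K) ℝ :=
  Matrix.of fun i j => S (σ₁ i) (σ₂ j)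

/-- The normalized average of `x` over the block `{i : blk i = k}`. -/
noncomputable def blockAvg {K L : ℕ} (blk : Fin K → Fin L) (x : Fin K → ℝ) (k : Fin L) : ℝ :=
  (∑ i ∈ Finset.univ.filter (fun i => blk i = k), x i) /
    (Finset.univ.filter (fun i => blk i = k)).card

/-- The edge relation `l ⊲ k`: the off-diagonal block `S̃_{lk}` is nonzero. -/
def edgeA {K L : ℕ} (S : Matrix (Fin K) (Fin K) ℝ) (σ₁ σ₂ : Equiv.Perm (Fin K))
    (blk : Fin K → Fin L) (l k : Fin L) : Prop :=
  l ≠ k ∧ ∃ i j, blk i = l ∧ blk j = k ∧ tildeS S σ₁ σ₂ i j ≠ 0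

/-- The edge relation `l ≺ k`: the block `Q_{lk}` of `Q = Q₁Q₂ᵗ` is nonzero, i.e. there are
`i, j` in blocks `l, k` with `σ₁ i = σ₂ j`. -/
def edgeP {K L : ℕ} (σ₁ σ₂ : Equiv.Perm (Fin K)) (blk : Fin K → Fin L) (l k : Fin L) : Prop :=
  ∃ i j, blk i = l ∧ blk j = k ∧ σ₁ i = σ₂ j

/-- The normal form data: `blk` is a monotone surjective assignment of the `K` indices to `L`
consecutive blocks, `S̃ = Q₁ S Q₂ᵗ` is block upper triangular with positive main diagonal,
and each diagonal block `S̃_ll` is fully indecomposable. -/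
def IsNormalForm {K L : ℕ} (S : Matrix (Fin K) (Fin K) ℝ) (σ₁ σ₂ : Equiv.Perm (Fin K))
    (blk : Fin K → Fin L) : Prop :=
  Monotone blk ∧ Function.Surjective blk ∧
  (∀ i j, tildeS S σ₁ σ₂ i j ≠ 0 → blk i ≤ blk j) ∧
  (∀ i, 0 < tildeS S σ₁ σ₂ i i) ∧
  (∀ l : Fin L, ∀ I J : Finset (Fin K), (∀ i ∈ I, blk i = l) → (∀ j ∈ J, blk j = l) →
    (Finset.univ.filter (fun i => blk i = l)).card ≤ I.card + J.card →
    ∃ i ∈ I, ∃ j ∈ J, tildeS S σ₁ σ₂ i j ≠ 0)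

/-- A cycle of length `ℓ ≥ 1` in the directed graph with edge relation `E`. -/
def IsCycle {L : ℕ} (E : Fin L → Fin L → Prop) (ℓ : ℕ) (γ : ℕ → Fin L) : Prop :=
  1 ≤ ℓ ∧ γ ℓ = γ 0 ∧ ∀ t < ℓ, E (γ t) (γ (t + 1))

open scoped Classical in
/-- `⟨γ⟩`: the number of edges of the path `γ` (of length `ℓ`) lying in `ℰ^≺ ∖ ℰ^⊲`. -/
noncomputable def precCount {L : ℕ} (Ea Ep : Fin L → Fin L → Prop) (ℓ : ℕ)
    (γ : ℕ → Fin L) : ℕ :=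
  ((Finset.range ℓ).filter fun t =>
    Ep (γ t) (γ (t + 1)) ∧ ¬ Ea (γ t) (γ (t + 1))).card

/-- The set of ratios `⟨γ⟩/|γ|` over all cycles `γ` of the graph with edges `ℰ^⊲ ∪ ℰ^≺`. -/
def ratioSet {L : ℕ} (Ea Ep : Fin L → Fin L → Prop) : Set ℝ :=
  {r | ∃ (ℓ : ℕ) (γ : ℕ → Fin L),
    IsCycle (fun a b => Ea a b ∨ Ep a b) ℓ γ ∧ r = (precCount Ea Ep ℓ γ : ℝ) / ℓ}

/-!
Every block `l` has a `≺`-successor (a permutation maps some index of block `l` somewhere), so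
following successors in the finite vertex set produces a cycle. Since `l ⊲ k` forces `l < k`,
no cycle consists of `⊲`-edges alone, so `⟨γ⟩ ≥ 1` and every ratio lies in `(0, 1]`. The minimum
exists because a cycle that revisits a vertex splits into two shorter cycles, and the ratio of the
whole is a mediant of the ratios of the pieces; hence every ratio is bounded below by the ratio of
a cycle of length at most `L`, and there are only finitely many such ratios.
-/

theorem div_le_add_div_add_or {a b c d : ℝ} (hb : 0 < b) (hd : 0 < d) :
    a / b ≤ (a + c) / (b + d) ∨ c / d ≤ (a + c) / (b + d) := by
  rcases le_total (a / b) (c / d) with h | h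
  · left
    rw [div_le_div_iff₀ hb hd] at h
    rw [div_le_div_iff₀ hb (by linarith)]
    nlinarith
  · right
    rw [div_le_div_iff₀ hd hb] at h
    rw [div_le_div_iff₀ hd (by linarith)]
    nlinarith

theorem exists_isLeast_of_forall_exists_le {α : Type*} [LinearOrder α] {s t : Set α}
    (ht : t.Finite) (hs : s.Nonempty) (h : ∀ x ∈ s, ∃ y ∈ s ∩ t, y ≤ x) : ∃ κ, IsLeast s κ := by
  obtain ⟨x, hx⟩ := hs
  obtain ⟨y, hy, -⟩ := h x hx
  obtain ⟨κ, hκ, hmin⟩ := Set.exists_min_image (s ∩ t) id (ht.inter_of_right s) ⟨y, hy⟩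
  refine ⟨κ, hκ.1, fun z hz => ?_⟩
  obtain ⟨y, hy, hyz⟩ := h z hz
  exact (hmin y hy).trans hyz

section Cycles

variable {L : ℕ} {E Ea Ep : Fin L → Fin L → Prop} {ℓ : ℕ} {γ : ℕ → Fin L}

theorem exists_lt_le_eq (γ : ℕ → Fin L) : ∃ a b, a < b ∧ b ≤ L ∧ γ a = γ b := by
  obtain ⟨x, y, hne, hxy⟩ :=
    Fintype.exists_ne_map_eq_of_card_lt (fun t : Fin (L + 1) => γ t) (by simp)
  rcases Fin.lt_or_lt_of_ne hne with h | h
  · exact ⟨x, y, h, Nat.lt_succ_iff.mp y.isLt, hxy⟩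
  · exact ⟨y, x, h, Nat.lt_succ_iff.mp x.isLt, hxy.symm⟩

theorem exists_isCycle_of_forall_exists [Nonempty (Fin L)] (h : ∀ x, ∃ y, E x y) :
    ∃ ℓ γ, IsCycle E ℓ γ := by
  choose f hf using h
  obtain ⟨x⟩ := ‹Nonempty (Fin L)›
  obtain ⟨a, b, hab, -, heq⟩ := exists_lt_le_eq fun t => f^[t] x
  refine ⟨b - a, fun t => f^[a + t] x, by omega, by simp [Nat.add_sub_cancel' hab.le, heq], ?_⟩
  intro t _
  dsimp only
  rw [← add_assoc, Function.iterate_succ_apply']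
  exact hf _

theorem IsCycle.exists_not_of_lt (hc : IsCycle E ℓ γ) {R : Fin L → Fin L → Prop}
    (hR : ∀ x y, R x y → x < y) : ∃ t < ℓ, ¬ R (γ t) (γ (t + 1)) := by
  by_contra! h
  have hmono : StrictMonoOn γ (Set.Iic ℓ) :=
    strictMonoOn_Iic_of_lt_succ fun t ht => hR _ _ (h t ht)
  have := hmono (Set.mem_Iic.mpr (Nat.zero_le ℓ)) (Set.mem_Iic.mpr le_rfl) hc.1
  exact this.ne hc.2.1.symm

theorem IsCycle.exists_right_not_left (hc : IsCycle (fun x y => Ea x y ∨ Ep x y) ℓ γ)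
    (hlt : ∀ x y, Ea x y → x < y) :
    ∃ t < ℓ, Ep (γ t) (γ (t + 1)) ∧ ¬ Ea (γ t) (γ (t + 1)) := by
  obtain ⟨t, ht, hnot⟩ := hc.exists_not_of_lt hlt
  exact ⟨t, ht, (hc.2.2 t ht).resolve_left hnot, hnot⟩

def shortcut (a b : ℕ) (γ : ℕ → Fin L) (t : ℕ) : Fin L :=
  if t ≤ a then γ t else γ (t + (b - a))

theorem shortcut_of_le {a b t : ℕ} (ht : t ≤ a) : shortcut a b γ t = γ t := if_pos ht

theorem shortcut_add {a b : ℕ} (hab : a ≤ b) (heq : γ a = γ b) (t : ℕ) :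
    shortcut a b γ (a + t) = γ (b + t) := by
  unfold shortcut
  split_ifs with h
  · obtain rfl : t = 0 := by omega
    exact heq
  · congr 1
    omega

theorem IsCycle.of_segment {a b : ℕ} (hc : IsCycle E ℓ γ) (hab : a < b) (hbℓ : b ≤ ℓ)
    (heq : γ a = γ b) : IsCycle E (b - a) fun t => γ (a + t) := by
  refine ⟨by omega, by dsimp only; rw [Nat.add_sub_cancel' hab.le, add_zero, heq], fun t ht => ?_⟩
  dsimp only
  rw [← add_assoc]
  exact hc.2.2 _ (by omega)

theorem IsCycle.shortcut {a b : ℕ} (hc : IsCycle E ℓ γ) (hab : a ≤ b) (hbℓ : b < ℓ)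
    (heq : γ a = γ b) : IsCycle E (a + (ℓ - b)) (shortcut a b γ) := by
  refine ⟨by omega, ?_, fun t ht => ?_⟩
  · rw [shortcut_add hab heq, Nat.add_sub_cancel' hbℓ.le, hc.2.1, shortcut_of_le (Nat.zero_le a)]
  · by_cases hta : t < a
    · rw [shortcut_of_le hta.le, shortcut_of_le hta]
      exact hc.2.2 t (by omega)
    · obtain ⟨s, rfl⟩ := Nat.exists_eq_add_of_le (not_lt.mp hta)
      rw [shortcut_add hab heq, add_assoc, shortcut_add hab heq, ← add_assoc]
      exact hc.2.2 _ (by omega)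

theorem precCount_congr {n : ℕ} {γ' : ℕ → Fin L} (h : ∀ t ≤ n, γ t = γ' t) :
    precCount Ea Ep n γ = precCount Ea Ep n γ' := by
  classical
  unfold precCount
  congr 1
  refine Finset.filter_congr fun t ht => ?_
  rw [Finset.mem_range] at ht
  rw [h t ht.le, h (t + 1) ht]

theorem precCount_add (m n : ℕ) (γ : ℕ → Fin L) :
    precCount Ea Ep (m + n) γ = precCount Ea Ep m γ + precCount Ea Ep n fun t => γ (m + t) := by
  classical
  simp only [precCount, Finset.card_filter, Finset.sum_range_add, add_assoc]

theorem precCount_le (ℓ : ℕ) (γ : ℕ → Fin L) : precCount Ea Ep ℓ γ ≤ ℓ := by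
  classical
  exact (Finset.card_filter_le _ _).trans (Finset.card_range ℓ).le

theorem precCount_pos (h : ∃ t < ℓ, Ep (γ t) (γ (t + 1)) ∧ ¬ Ea (γ t) (γ (t + 1))) :
    0 < precCount Ea Ep ℓ γ := by
  classical
  obtain ⟨t, ht, hedge⟩ := h
  exact Finset.card_pos.mpr ⟨t, Finset.mem_filter.mpr ⟨Finset.mem_range.mpr ht, hedge⟩⟩

theorem precCount_eq_segment_add_shortcut {a b : ℕ} (hab : a ≤ b) (hbℓ : b ≤ ℓ)
    (heq : γ a = γ b) :
    precCount Ea Ep ℓ γ = precCount Ea Ep (b - a) (fun t => γ (a + t))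
      + precCount Ea Ep (a + (ℓ - b)) (shortcut a b γ) := by
  have hℓ : ℓ = a + ((b - a) + (ℓ - b)) := by omega
  conv_lhs => rw [hℓ]
  rw [precCount_add, precCount_add, precCount_add,
    precCount_congr (γ := shortcut a b γ) fun t ht => shortcut_of_le ht]
  have hrest : (fun t => γ (a + ((b - a) + t))) = fun t => shortcut a b γ (a + t) := by
    funext t
    rw [shortcut_add hab heq]
    congr 1
    omega
  rw [hrest]
  ring

end Cycles

section Ratios

variable {L : ℕ} {Ea Ep : Fin L → Fin L → Prop}

theorem exists_short_cycle_ratio_le {ℓ : ℕ} {γ : ℕ → Fin L}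
    (hc : IsCycle (fun x y => Ea x y ∨ Ep x y) ℓ γ) :
    ∃ ℓ' γ', IsCycle (fun x y => Ea x y ∨ Ep x y) ℓ' γ' ∧ ℓ' ≤ L ∧
      (precCount Ea Ep ℓ' γ' : ℝ) / ℓ' ≤ (precCount Ea Ep ℓ γ : ℝ) / ℓ := by
  induction ℓ using Nat.strong_induction_on generalizing γ with
  | _ ℓ ih =>
  by_cases hℓ : ℓ ≤ L
  · exact ⟨ℓ, γ, hc, hℓ, le_rfl⟩
  obtain ⟨a, b, hab, hbL, heq⟩ := exists_lt_le_eq γ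
  have hbℓ : b < ℓ := by omega
  have hcount := precCount_eq_segment_add_shortcut (Ea := Ea) (Ep := Ep) hab.le hbℓ.le heq
  have hlen : (ℓ : ℝ) = ((b - a : ℕ) : ℝ) + ((a + (ℓ - b) : ℕ) : ℝ) := by
    rw [← Nat.cast_add]
    congr 1
    omega
  rcases div_le_add_div_add_or (a := (precCount Ea Ep (b - a) fun t => γ (a + t) : ℝ))
      (b := ((b - a : ℕ) : ℝ)) (c := (precCount Ea Ep (a + (ℓ - b)) (shortcut a b γ) : ℝ))
      (d := ((a + (ℓ - b) : ℕ) : ℝ)) (Nat.cast_pos.mpr (by omega)) (Nat.cast_pos.mpr (by omega))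
      with h | h
  · refine ⟨b - a, _, hc.of_segment hab hbℓ.le heq, by omega, ?_⟩
    simpa only [hcount, hlen, Nat.cast_add] using h
  · obtain ⟨ℓ', γ', hc', hℓ', hle⟩ := ih _ (by omega) (hc.shortcut hab.le hbℓ heq)
    refine ⟨ℓ', γ', hc', hℓ', hle.trans ?_⟩
    simpa only [hcount, hlen, Nat.cast_add] using h

theorem ratioSet_subset_Ioc (hlt : ∀ x y, Ea x y → x < y) : ratioSet Ea Ep ⊆ Set.Ioc 0 1 := by
  rintro r ⟨ℓ, γ, hc, rfl⟩
  have hℓ : (0 : ℝ) < ℓ := by exact_mod_cast hc.1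
  refine ⟨div_pos ?_ hℓ, div_le_one_of_le₀ ?_ hℓ.le⟩
  · exact_mod_cast precCount_pos (hc.exists_right_not_left hlt)
  · exact_mod_cast precCount_le ℓ γ

theorem exists_isLeast_ratioSet
    (hcyc : ∃ ℓ γ, IsCycle (fun x y => Ea x y ∨ Ep x y) ℓ γ) :
    ∃ κ, IsLeast (ratioSet Ea Ep) κ := by
  refine exists_isLeast_of_forall_exists_le
    (((Set.finite_Iic L).prod (Set.finite_Iic L)).image fun q : ℕ × ℕ => (q.1 : ℝ) / q.2) ?_ ?_
  · obtain ⟨ℓ, γ, hc⟩ := hcyc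
    exact ⟨_, ℓ, γ, hc, rfl⟩
  · rintro r ⟨ℓ, γ, hc, rfl⟩
    obtain ⟨ℓ', γ', hc', hℓ', hle⟩ := exists_short_cycle_ratio_le hc
    refine ⟨_, ⟨⟨ℓ', γ', hc', rfl⟩, ⟨(precCount Ea Ep ℓ' γ', ℓ'), ?_, rfl⟩⟩, hle⟩
    exact ⟨(precCount_le ℓ' γ').trans hℓ', hℓ'⟩

end Ratios

section NormalForm

variable {K L : ℕ} {S : Matrix (Fin K) (Fin K) ℝ} {σ₁ σ₂ : Equiv.Perm (Fin K)}
  {blk : Fin K → Fin L}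

theorem IsNormalForm.edgeA_lt (hnf : IsNormalForm S σ₁ σ₂ blk) {l k : Fin L}
    (h : edgeA S σ₁ σ₂ blk l k) : l < k := by
  obtain ⟨hne, i, j, rfl, rfl, hS⟩ := h
  exact (hnf.2.2.1 i j hS).lt_of_ne hne

theorem IsNormalForm.exists_edgeP (hnf : IsNormalForm S σ₁ σ₂ blk) (l : Fin L) :
    ∃ k, edgeP σ₁ σ₂ blk l k := by
  obtain ⟨i, rfl⟩ := hnf.2.1 l
  exact ⟨_, i, σ₂⁻¹ (σ₁ i), rfl, rfl, by simp⟩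

end NormalForm

theorem stmt_11_general (K L : ℕ) (hL : 1 ≤ L)
    (S : Matrix (Fin K) (Fin K) ℝ)
    (σ₁ σ₂ : Equiv.Perm (Fin K)) (blk : Fin K → Fin L)
    (hnf : IsNormalForm S σ₁ σ₂ blk) :
    (∃ (ℓ : ℕ) (γ : ℕ → Fin L),
        IsCycle (fun a b => edgeA S σ₁ σ₂ blk a b ∨ edgeP σ₁ σ₂ blk a b) ℓ γ) ∧
    (∀ (ℓ : ℕ) (γ : ℕ → Fin L),
        IsCycle (fun a b => edgeA S σ₁ σ₂ blk a b ∨ edgeP σ₁ σ₂ blk a b) ℓ γ →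
        ∃ t < ℓ, edgeP σ₁ σ₂ blk (γ t) (γ (t + 1)) ∧ ¬ edgeA S σ₁ σ₂ blk (γ t) (γ (t + 1))) ∧
    ∃ κ : ℝ, IsLeast (ratioSet (edgeA S σ₁ σ₂ blk) (edgeP σ₁ σ₂ blk)) κ ∧ 0 < κ ∧ κ ≤ 1 := by
  have : Nonempty (Fin L) := ⟨⟨0, hL⟩⟩
  have hlt : ∀ l k, edgeA S σ₁ σ₂ blk l k → l < k := fun _ _ => hnf.edgeA_lt
  have hcyc : ∃ ℓ γ, IsCycle (fun a b => edgeA S σ₁ σ₂ blk a b ∨ edgeP σ₁ σ₂ blk a b) ℓ γ :=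
    exists_isCycle_of_forall_exists fun l => (hnf.exists_edgeP l).imp fun _ => Or.inr
  obtain ⟨κ, hκ⟩ := exists_isLeast_ratioSet hcyc
  exact ⟨hcyc, fun _ _ hc => hc.exists_right_not_left hlt, κ, hκ, ratioSet_subset_Ioc hlt hκ.1⟩

/-- Let `S` be irreducible nonnegative with support, with normal form and
edge sets `ℰ^⊲`, `ℰ^≺` on `{1,…,L}`. Then the graph `({1,…,L}, ℰ^⊲ ∪ ℰ^≺)` contains a cycle,
every cycle contains an edge of `ℰ^≺ ∖ ℰ^⊲`, and `κ := min_γ ⟨γ⟩/|γ|` over all cycles `γ` is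
well defined with `0 < κ ≤ 1`. -/
theorem stmt_11 (K L : ℕ) (hK : 1 ≤ K) (hL : 1 ≤ L)
    (S : Matrix (Fin K) (Fin K) ℝ)
    (hS : ∀ i j, 0 ≤ S i j)
    (hirr : ∀ i j, ∃ m : ℕ, 1 ≤ m ∧ 0 < (S ^ m) i j)
    (hsupp : ∃ π : Equiv.Perm (Fin K), ∀ i, 0 < S i (π i))
    (σ₁ σ₂ : Equiv.Perm (Fin K)) (blk : Fin K → Fin L)
    (hnf : IsNormalForm S σ₁ σ₂ blk) :
    (∃ (ℓ : ℕ) (γ : ℕ → Fin L),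
        IsCycle (fun a b => edgeA S σ₁ σ₂ blk a b ∨ edgeP σ₁ σ₂ blk a b) ℓ γ) ∧
    (∀ (ℓ : ℕ) (γ : ℕ → Fin L),
        IsCycle (fun a b => edgeA S σ₁ σ₂ blk a b ∨ edgeP σ₁ σ₂ blk a b) ℓ γ →
        ∃ t < ℓ, edgeP σ₁ σ₂ blk (γ t) (γ (t + 1)) ∧ ¬ edgeA S σ₁ σ₂ blk (γ t) (γ (t + 1))) ∧
    ∃ κ : ℝ, IsLeast (ratioSet (edgeA S σ₁ σ₂ blk) (edgeP σ₁ σ₂ blk)) κ ∧ 0 < κ ∧ κ ≤ 1 :=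
  stmt_11_general K L hL S σ₁ σ₂ blk hnf
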